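/- arXiv:2605.22371 — 6 statements merged into one kernel-verified Lean document; each statement's English description precedes it below -/
import Mathlib

section
/- For every real B ≥ 1, N*(B) = 2·Σ_{1 ≤ n ≤ B} Σ_{d | n³, n³/B ≤ d ≤ B²} r_{4k}(d)·1_S(n²/d), where n ranges over positive integers and d over positive divisors of n³. -/
open scoped BigOperators Classical
open Filter Asymptotics

noncomputable section

/-- Value of the multiplicative function `r*_{4k}` at the prime power `p^l`. -/
def rstarPP (k p l : ℕ) : ℝ :=
  if p = 2 ∧ 1 ≤ l then
    (1 - (-1 : ℝ)^k / (1 - 2^(2*k-1))) * 2^(l*(2*k-1))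
      - (-1 : ℝ)^k * (1 - 2^(2*k)) / (1 - 2^(2*k-1))
  else (1 - (p : ℝ)^((l+1)*(2*k-1))) / (1 - (p : ℝ)^(2*k-1))

/-- The multiplicative function `r*_{4k}`, given by its values on prime powers. -/
def rstar (k n : ℕ) : ℝ := n.factorization.prod (fun p l => rstarPP k p l)

/-- The indicator function `1_S` of rationals having no `p`-adic valuation equal to `1`
outside of `S`. -/
def oneS (S : Finset ℕ) (q : ℚ) : ℝ :=
  if ∀ p : ℕ, p.Prime → p ∉ S → padicValRat p q ≠ 1 then 1 else 0

/-- `r_{4k}(d)`: the number of representations of `d` as a sum of `4k` squares. -/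
def rquad (k d : ℕ) : ℕ :=
  Set.ncard {y : Fin (4*k) → ℤ | ∑ i, (y i)^2 = (d : ℤ)}

/-- The divisor sum `S(X,Y)`. -/
def Ssum (k : ℕ) (S : Finset ℕ) (X Y : ℝ) : ℝ :=
  ∑ n ∈ Finset.Icc 1 ⌊X⌋₊, ∑ d ∈ (n^3).divisors.filter (fun d : ℕ => (d : ℝ) ≤ Y),
    rstar k d * oneS S ((n : ℚ)^2 / (d : ℚ))

/-- The divisor sum `T(B)`. -/
def Tsum (k : ℕ) (S : Finset ℕ) (B : ℝ) : ℝ :=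
  ∑ n ∈ Finset.Icc 1 ⌊B⌋₊, ∑ d ∈ (n^3).divisors.filter (fun d : ℕ => (d : ℝ) ≤ (n : ℝ)^3 / B),
    rstar k d * oneS S ((n : ℚ)^2 / (d : ℚ))

/-- `M(X,Y) = ∫₀^X ∫₀^Y S(x,y) dy dx`. -/
def Msum (k : ℕ) (S : Finset ℕ) (X Y : ℝ) : ℝ :=
  ∫ x in (0:ℝ)..X, ∫ y in (0:ℝ)..Y, Ssum k S x y

/-- Second difference `𝒟f(X₁,X₂;Y₁,Y₂)`. -/
def DD (f : ℝ → ℝ → ℝ) (X₁ X₂ Y₁ Y₂ : ℝ) : ℝ :=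
  f X₁ Y₁ + f X₂ Y₂ - f X₁ Y₂ - f X₂ Y₁

/-- The counting function `N*(B)` (no coprimality condition). -/
def Nstar (k : ℕ) (S : Finset ℕ) (B : ℝ) : ℕ :=
  Set.ncard {P : ℤ × (Fin (4*k) → ℤ) × ℤ |
    P.1 ≠ 0 ∧ P.1^3 = (∑ i, (P.2.1 i)^2) * P.2.2 ∧
    max (max |(P.1 : ℝ)| (Real.sqrt (∑ i, ((P.2.1 i : ℝ))^2))) |(P.2.2 : ℝ)| ≤ B ∧
    ∀ p : ℕ, p.Prime → p ∉ S →
      (padicValInt p P.2.2 : ℤ) - (padicValInt p P.1 : ℤ) ≠ 1}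

/-- The counting function `N(B)` of semi-integral points. -/
def Ncount (k : ℕ) (S : Finset ℕ) (B : ℝ) : ℕ :=
  Set.ncard {P : ℤ × (Fin (4*k) → ℤ) × ℤ |
    Int.gcd P.1 ((Int.gcd (Finset.univ.gcd P.2.1) P.2.2 : ℕ) : ℤ) = 1 ∧
    P.1 ≠ 0 ∧ P.1^3 = (∑ i, (P.2.1 i)^2) * P.2.2 ∧
    max (max |(P.1 : ℝ)| (Real.sqrt (∑ i, ((P.2.1 i : ℝ))^2))) |(P.2.2 : ℝ)| ≤ B ∧
    ∀ p : ℕ, p.Prime → p ∉ S →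
      (padicValInt p P.2.2 : ℤ) - (padicValInt p P.1 : ℤ) ≠ 1}

/-- The `a`-th term of the local series `F_p(s,w)`. -/
def FpTerm (k : ℕ) (S : Finset ℕ) (p : ℕ) (s w : ℂ) (a : ℕ) : ℂ :=
  if p ∈ S then
    (p : ℂ)^(-(a : ℂ) * s) *
      ∑ b ∈ Finset.range (3*a+1), (p : ℂ)^(-(b : ℂ) * w) * (rstar k (p^b) : ℂ)
  else
    (p : ℂ)^(-(a : ℂ) * s) *
      ∑ b ∈ (Finset.range (3*a+1)).filter (fun b : ℕ => (b : ℤ) ≠ 2*(a : ℤ) - 1),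
        (p : ℂ)^(-(b : ℂ) * w) * (rstar k (p^b) : ℂ)

/-- The local series `F_p(s,w)`. -/
def Fp (k : ℕ) (S : Finset ℕ) (p : ℕ) (s w : ℂ) : ℂ := ∑' a : ℕ, FpTerm k S p s w a

/-- The local factor `G_p(s,w)`. -/
def Gp (k : ℕ) (S : Finset ℕ) (p : ℕ) (s w : ℂ) : ℂ :=
  (1 - (p : ℂ)^(-s)) * (1 - (p : ℂ)^(-(s + 2*(w - 2*(k : ℂ) + 1)))) *
    (1 - (p : ℂ)^(-(s + 3*(w - 2*(k : ℂ) + 1)))) * Fp k S p s w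

/-- The Euler product `G_S(s,w)`. -/
def GS (k : ℕ) (S : Finset ℕ) (s w : ℂ) : ℂ :=
  ∏' p : Nat.Primes, Gp k S (p : ℕ) s w

/-- The double Dirichlet series `F(s,w)`. -/
def Ffun (k : ℕ) (S : Finset ℕ) (s w : ℂ) : ℂ :=
  ∑' n : ℕ, ∑ d ∈ (n^3).divisors,
    (rstar k d : ℂ) * (oneS S ((n : ℚ)^2 / (d : ℚ)) : ℂ) * (n : ℂ)^(-s) * (d : ℂ)^(-w)

/-- The local series `F_p(1, 2k-1)` (real-valued). -/
def FpOne (k : ℕ) (S : Finset ℕ) (p : ℕ) : ℝ :=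
  if p ∈ S then
    ∑' a : ℕ, ((p : ℝ)^a)⁻¹ *
      ∑ b ∈ Finset.range (3*a+1), ((p : ℝ)^(b*(2*k-1)))⁻¹ * rstar k (p^b)
  else
    ∑' a : ℕ, ((p : ℝ)^a)⁻¹ *
      ∑ b ∈ (Finset.range (3*a+1)).filter (fun b : ℕ => (b : ℤ) ≠ 2*(a : ℤ) - 1),
        ((p : ℝ)^(b*(2*k-1)))⁻¹ * rstar k (p^b)

/-- The constant `𝔠 = ∏_p (1-1/p)³ F_p(1,2k-1)`. -/
def cConst (k : ℕ) (S : Finset ℕ) : ℝ :=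
  ∏' p : Nat.Primes, (1 - ((p : ℕ) : ℝ)⁻¹)^3 * FpOne k S (p : ℕ)

/-! A point `(x, y, z)` is determined by `n = |x|`, the sign of `x`, the vector `y` and
`d = ∑ yᵢ²`: the equation forces `d ∣ n³` and `z = ± n³/d`. In these coordinates the height
condition reads `n ≤ B`, `n³/B ≤ d ≤ B²`, and `v_p(z) - v_p(x) = v_p(z/x) = v_p(n²/d)`, so each
admissible pair `(n, d)` carries `2 r_{4k}(d)` points when `1_S(n²/d) = 1` and none otherwise. -/

def AvoidsValuationOne (S : Finset ℕ) (q : ℚ) : Prop :=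
  ∀ p : ℕ, p.Prime → p ∉ S → padicValRat p q ≠ 1

lemma oneS_eq_ite (S : Finset ℕ) (q : ℚ) :
    oneS S q = if AvoidsValuationOne S q then 1 else 0 := rfl

def sumSqReps (m d : ℕ) : Finset (Fin m → ℤ) :=
  (Fintype.piFinset fun _ => Finset.Icc (-(d : ℤ)) d).filter fun y => ∑ i, y i ^ 2 = d

lemma mem_sumSqReps {m d : ℕ} {y : Fin m → ℤ} : y ∈ sumSqReps m d ↔ ∑ i, y i ^ 2 = d := by
  refine ⟨fun h => (Finset.mem_filter.1 h).2, fun h => Finset.mem_filter.2 ⟨?_, h⟩⟩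
  refine Fintype.mem_piFinset.2 fun i => Finset.mem_Icc.2 (abs_le.1 ?_)
  calc |y i| = (y i).natAbs := Int.abs_eq_natAbs _
    _ ≤ y i ^ 2 := Int.natAbs_le_self_sq _
    _ ≤ ∑ j, y j ^ 2 := Finset.single_le_sum (fun j _ => sq_nonneg (y j)) (Finset.mem_univ i)
    _ = d := h

lemma rquad_eq_card_sumSqReps (k d : ℕ) : rquad k d = (sumSqReps (4 * k) d).card := by
  rw [rquad, ← Set.ncard_coe_finset]
  congr 1
  ext y
  exact mem_sumSqReps.symm

def pointsOver (m n d : ℕ) : Finset (ℤ × (Fin m → ℤ) × ℤ) :=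
  (({-1, 1} : Finset ℤ) ×ˢ sumSqReps m d).image fun sy => (sy.1 * n, sy.2, sy.1 * (n ^ 3 / d : ℕ))

lemma card_pointsOver {m n d : ℕ} (hn : n ≠ 0) :
    (pointsOver m n d).card = 2 * (sumSqReps m d).card := by
  rw [pointsOver, Finset.card_image_of_injective, Finset.card_product]
  · rfl
  intro a b h
  simp only [Prod.mk.injEq] at h
  exact Prod.ext (mul_right_cancel₀ (by exact_mod_cast hn) h.1) h.2.1

lemma natAbs_sumSq_of_mem_pointsOver {m n d : ℕ} {P : ℤ × (Fin m → ℤ) × ℤ}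
    (hP : P ∈ pointsOver m n d) : P.1.natAbs = n ∧ ∑ i, P.2.1 i ^ 2 = d := by
  obtain ⟨⟨s, y⟩, hsy, rfl⟩ := Finset.mem_image.1 hP
  obtain ⟨hs, hy⟩ := Finset.mem_product.1 hsy
  refine ⟨?_, mem_sumSqReps.1 hy⟩
  rcases Finset.mem_insert.1 hs with rfl | hs <;> simp_all

lemma disjoint_pointsOver {m n n' d d' : ℕ} (h : n ≠ n' ∨ d ≠ d') :
    Disjoint (pointsOver m n d) (pointsOver m n' d') := by
  refine Finset.disjoint_left.2 fun P hP hP' => ?_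
  have := natAbs_sumSq_of_mem_pointsOver hP
  have := natAbs_sumSq_of_mem_pointsOver hP'
  omega

lemma mem_pointsOver {m n d : ℕ} (hn : n ≠ 0) (hd : d ∣ n ^ 3) {x z : ℤ} {y : Fin m → ℤ} :
    (x, y, z) ∈ pointsOver m n d ↔ x.natAbs = n ∧ ∑ i, y i ^ 2 = d ∧ x ^ 3 = d * z := by
  have hde : (d : ℤ) * (n ^ 3 / d : ℕ) = (n : ℤ) ^ 3 := by exact_mod_cast Nat.mul_div_cancel' hd
  constructor
  · intro hP
    refine ⟨(natAbs_sumSq_of_mem_pointsOver hP).1, (natAbs_sumSq_of_mem_pointsOver hP).2, ?_⟩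
    obtain ⟨⟨s, y⟩, hsy, hP⟩ := Finset.mem_image.1 hP
    simp only [Prod.mk.injEq] at hP
    obtain ⟨rfl, -, rfl⟩ := hP
    have hs : s = -1 ∨ s = 1 := by simpa using (Finset.mem_product.1 hsy).1
    rcases hs with rfl | rfl
    · linear_combination hde
    · linear_combination -hde
  · rintro ⟨hx, hy, hxz⟩
    have hx0 : x ≠ 0 := by omega
    have hsign : x.sign = -1 ∨ x.sign = 1 := by
      rcases Int.sign_trichotomy x with h | h | h <;> simp_all
    have hdz : (d : ℤ) ≠ 0 := by
      rintro h
      exact hx0 (pow_eq_zero_iff three_ne_zero |>.1 (by rw [hxz, h, zero_mul]))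
    refine Finset.mem_image.2 ⟨(x.sign, y), Finset.mem_product.2 ⟨?_, mem_sumSqReps.2 hy⟩, ?_⟩
    · rcases hsign with h | h <;> simp [h]
    have hxn : x.sign * n = x := by rw [← hx, Int.sign_mul_natAbs]
    have hz : x.sign * (n ^ 3 / d : ℕ) = z := by
      refine mul_left_cancel₀ hdz ?_
      rcases hsign with h | h <;> rw [h] at hxn ⊢ <;> rw [← hxn] at hxz
      · linear_combination hxz - hde
      · linear_combination hxz + hde
    rw [hxn, hz]

lemma max_le_iff_of_cube_eq {B : ℝ} {x z : ℤ} {d : ℕ} (hx : x ≠ 0) (h : x ^ 3 = d * z) :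
    max (max |(x : ℝ)| √(d : ℝ)) |(z : ℝ)| ≤ B ↔
      x.natAbs ≤ ⌊B⌋₊ ∧ (x.natAbs : ℝ) ^ 3 / B ≤ d ∧ (d : ℝ) ≤ B ^ 2 := by
  have hn : 1 ≤ x.natAbs := Int.natAbs_pos.2 hx
  have habs : (x.natAbs : ℝ) = |(x : ℝ)| := by rw [Nat.cast_natAbs, Int.cast_abs]
  have hd : (0 : ℝ) < d := by
    refine Nat.cast_pos.2 (Nat.pos_of_ne_zero ?_)
    rintro rfl
    exact hx (pow_eq_zero_iff three_ne_zero |>.1 (by simpa using h))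
  have hcube : (x.natAbs : ℝ) ^ 3 = d * |(z : ℝ)| := by
    rw [habs, ← abs_pow, ← abs_of_pos hd, ← abs_mul]
    exact_mod_cast congrArg (fun t : ℤ => |(t : ℝ)|) h
  rcases le_or_gt B 0 with hB | hB
  · refine iff_of_false (fun h' => ?_) (fun h' => ?_)
    · have : (1 : ℝ) ≤ |(x : ℝ)| := by rw [← habs]; exact_mod_cast hn
      linarith [le_max_left (max |(x : ℝ)| √(d : ℝ)) |(z : ℝ)|, le_max_left |(x : ℝ)| √(d : ℝ)]
    · have := Nat.floor_eq_zero.2 (hB.trans_lt one_pos)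
      omega
  rw [max_le_iff, max_le_iff, Real.sqrt_le_iff, div_le_iff₀ hB, hcube,
    mul_le_mul_iff_of_pos_left hd, Nat.le_floor_iff hB.le, habs]
  simp only [hB.le, true_and]
  tauto

lemma padicValInt_sub_padicValInt_of_cube_eq {p : ℕ} [Fact p.Prime] {x z : ℤ} {d : ℕ}
    (hx : x ≠ 0) (h : x ^ 3 = d * z) :
    (padicValInt p z : ℤ) - padicValInt p x = padicValRat p ((x.natAbs : ℚ) ^ 2 / d) := by
  have hxz : (x : ℚ) ^ 3 = d * z := by exact_mod_cast h
  have hx' : (x : ℚ) ≠ 0 := by exact_mod_cast hx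
  have hz : (z : ℚ) ≠ 0 := by
    rintro hz
    exact hx' (pow_eq_zero_iff three_ne_zero |>.1 (by rw [hxz, hz, mul_zero]))
  have hd : (d : ℚ) ≠ 0 := by
    rintro hd
    exact hx' (pow_eq_zero_iff three_ne_zero |>.1 (by rw [hxz, hd, zero_mul]))
  have hquot : (z : ℚ) / x = (x.natAbs : ℚ) ^ 2 / d := by
    rw [Nat.cast_natAbs, Int.cast_abs, sq_abs, div_eq_div_iff hx' hd]
    linear_combination -hxz
  rw [← padicValRat.of_int, ← padicValRat.of_int, ← padicValRat.div hz hx', hquot]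

def divisorWindow (B : ℝ) (n : ℕ) : Finset ℕ :=
  (n ^ 3).divisors.filter fun d : ℕ => (n : ℝ) ^ 3 / B ≤ d ∧ (d : ℝ) ≤ B ^ 2

def goodDivisors (S : Finset ℕ) (B : ℝ) (n : ℕ) : Finset ℕ :=
  (divisorWindow B n).filter fun d : ℕ => AvoidsValuationOne S ((n : ℚ) ^ 2 / d)

lemma exists_pointsOver_iff {m : ℕ} {S : Finset ℕ} {B : ℝ} {x z : ℤ} {y : Fin m → ℤ} :
    (∃ n ∈ Finset.Icc 1 ⌊B⌋₊, ∃ d ∈ goodDivisors S B n, (x, y, z) ∈ pointsOver m n d) ↔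
      x ≠ 0 ∧ x ^ 3 = (∑ i, y i ^ 2) * z ∧
      max (max |(x : ℝ)| √(∑ i, (y i : ℝ) ^ 2)) |(z : ℝ)| ≤ B ∧
      ∀ p : ℕ, p.Prime → p ∉ S → (padicValInt p z : ℤ) - padicValInt p x ≠ 1 := by
  constructor
  · rintro ⟨n, hn, d, hd, hP⟩
    simp only [goodDivisors, divisorWindow, Finset.mem_filter, Nat.mem_divisors] at hd
    obtain ⟨⟨⟨hdvd, -⟩, hwindow⟩, hgood⟩ := hd
    have hn0 : n ≠ 0 := by have := (Finset.mem_Icc.1 hn).1; omega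
    obtain ⟨rfl, hyd, hxz⟩ := (mem_pointsOver hn0 hdvd).1 hP
    have hx : x ≠ 0 := Int.natAbs_ne_zero.1 hn0
    have hyR : ∑ i, (y i : ℝ) ^ 2 = d := by exact_mod_cast hyd
    refine ⟨hx, hyd ▸ hxz, ?_, fun p hp hpS => ?_⟩
    · rw [hyR, max_le_iff_of_cube_eq hx hxz]
      exact ⟨(Finset.mem_Icc.1 hn).2, hwindow⟩
    · have := Fact.mk hp
      rw [padicValInt_sub_padicValInt_of_cube_eq hx hxz]
      exact hgood p hp hpS
  · rintro ⟨hx, hxz, hB, hval⟩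
    obtain ⟨d, hyd⟩ : ∃ d : ℕ, ∑ i, y i ^ 2 = d :=
      ⟨_, (Int.toNat_of_nonneg (Finset.sum_nonneg fun i _ => sq_nonneg (y i))).symm⟩
    have hyR : ∑ i, (y i : ℝ) ^ 2 = d := by exact_mod_cast hyd
    rw [hyd] at hxz
    rw [hyR, max_le_iff_of_cube_eq hx hxz] at hB
    have hn : x.natAbs ≠ 0 := Int.natAbs_ne_zero.2 hx
    have hdvd : d ∣ x.natAbs ^ 3 :=
      ⟨z.natAbs, by rw [← Int.natAbs_pow, hxz, Int.natAbs_mul, Int.natAbs_natCast]⟩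
    refine ⟨x.natAbs, Finset.mem_Icc.2 ⟨Nat.pos_of_ne_zero hn, hB.1⟩, d, ?_,
      (mem_pointsOver hn hdvd).2 ⟨rfl, hyd, hxz⟩⟩
    refine Finset.mem_filter.2 ⟨Finset.mem_filter.2
      ⟨Nat.mem_divisors.2 ⟨hdvd, pow_ne_zero 3 hn⟩, hB.2⟩, fun p hp hpS => ?_⟩
    have := Fact.mk hp
    rw [← padicValInt_sub_padicValInt_of_cube_eq hx hxz]
    exact_mod_cast hval p hp hpS

lemma Nstar_eq_sum (k : ℕ) (S : Finset ℕ) (B : ℝ) :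
    Nstar k S B = ∑ n ∈ Finset.Icc 1 ⌊B⌋₊, ∑ d ∈ goodDivisors S B n, 2 * rquad k d := by
  set T := (Finset.Icc 1 ⌊B⌋₊).biUnion fun n =>
    (goodDivisors S B n).biUnion fun d => pointsOver (4 * k) n d
  have hT : Nstar k S B = T.card := by
    rw [Nstar, ← Set.ncard_coe_finset]
    congr 1
    ext ⟨x, y, z⟩
    simp only [T, Finset.coe_biUnion, Set.mem_iUnion, Finset.mem_coe, exists_prop]
    exact exists_pointsOver_iff.symm
  rw [hT, Finset.card_biUnion]
  · refine Finset.sum_congr rfl fun n hn => ?_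
    rw [Finset.card_biUnion fun d _ d' _ hdd' => disjoint_pointsOver (Or.inr hdd')]
    refine Finset.sum_congr rfl fun d _ => ?_
    rw [card_pointsOver (by have := (Finset.mem_Icc.1 hn).1; omega), rquad_eq_card_sumSqReps]
  · intro n _ n' _ hnn'
    simp only [Function.onFun, Finset.disjoint_biUnion_left, Finset.disjoint_biUnion_right]
    exact fun d _ d' _ => disjoint_pointsOver (Or.inl hnn')

theorem Nstar_eq_double_sum_general (k : ℕ) (S : Finset ℕ) (B : ℝ) :
    (Nstar k S B : ℝ) =
      2 * ∑ n ∈ Finset.Icc 1 ⌊B⌋₊,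
        ∑ d ∈ (n^3).divisors.filter (fun d : ℕ => (n : ℝ)^3 / B ≤ (d : ℝ) ∧ (d : ℝ) ≤ B^2),
          (rquad k d : ℝ) * oneS S ((n : ℚ)^2 / (d : ℚ)) := by
  rw [Nstar_eq_sum, Finset.mul_sum]
  push_cast
  refine Finset.sum_congr rfl fun n _ => ?_
  rw [goodDivisors, Finset.sum_filter, Finset.mul_sum]
  refine Finset.sum_congr rfl fun d _ => ?_
  rw [oneS_eq_ite]
  split_ifs <;> ring

/-- `N*(B) = 2·Σ_{1 ≤ n ≤ B} Σ_{d ∣ n³, n³/B ≤ d ≤ B²} r_{4k}(d)·1_S(n²/d)`. -/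
theorem Nstar_eq_double_sum (k : ℕ) (hk : 0 < k) (S : Finset ℕ) (hS : ∀ p ∈ S, p.Prime)
    (B : ℝ) (hB : 1 ≤ B) :
    (Nstar k S B : ℝ) =
      2 * ∑ n ∈ Finset.Icc 1 ⌊B⌋₊,
        ∑ d ∈ (n^3).divisors.filter (fun d : ℕ => (n : ℝ)^3 / B ≤ (d : ℝ) ∧ (d : ℝ) ≤ B^2),
          (rquad k d : ℝ) * oneS S ((n : ℚ)^2 / (d : ℚ)) :=
  Nstar_eq_double_sum_general k S B
end
end

section
/- For every real δ with 0 < δ < 1, every positive integer k₀, and every real B > 0, the following two inequalities hold: (1) Σ_{l=1}^{k₀} [S(δ^{l−1}B, δ^{3l}B²) − S(δ^{l}B, δ^{3l}B²)] ≤ T(B); (2) T(B) ≤ S(δ^{k₀}B, δ^{3k₀}B²) + Σ_{l=1}^{k₀} [S(δ^{l−1}B, δ^{3(l−1)}B²) − S(δ^{l}B, δ^{3(l−1)}B²)]. -/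
open scoped BigOperators Classical
open Filter Asymptotics

noncomputable section

lemma rstarPP_nonneg {k : ℕ} (hk : 0 < k) {p : ℕ} (hp : 2 ≤ p) (l : ℕ) :
    0 ≤ rstarPP k p l := by
  have hm : 1 ≤ 2*k - 1 := by omega
  unfold rstarPP
  split
  · rename_i h
    obtain ⟨hp2, hl⟩ := h
    set c : ℝ := 2^(2*k-1) with hc
    have hc2 : (2:ℝ) ≤ c := by
      calc (2:ℝ) = 2^1 := (pow_one 2).symm
      _ ≤ c := pow_le_pow_right₀ (by norm_num) hm
    set D : ℝ := (2:ℝ)^(l*(2*k-1)) with hDdef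
    have hD : c ≤ D := by
      apply pow_le_pow_right₀ (by norm_num)
      nlinarith
    have h2k : (2:ℝ)^(2*k) = 2*c := by
      rw [hc, ← pow_succ']
      congr 1; omega
    have hden : (1:ℝ) - c < 0 := by linarith
    have hne : (1:ℝ) - c ≠ 0 := ne_of_lt hden
    rw [h2k]
    clear_value c D
    rcases Nat.even_or_odd k with he | ho
    · rw [he.neg_one_pow]
      have key : (1 - 1/(1-c))*D - 1*(1-2*c)/(1-c) = ((1-c-1)*D - (1-2*c))/(1-c) := by
        field_simp [hne]
      rw [key]
      refine div_nonneg_iff.2 (Or.inr ⟨?_, hden.le⟩)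
      nlinarith [sq_nonneg (c-1)]
    · rw [ho.neg_one_pow]
      have key : (1 - (-1)/(1-c))*D - (-1)*(1-2*c)/(1-c) = ((1-c+1)*D + (1-2*c))/(1-c) := by
        field_simp [hne]
        ring
      rw [key]
      refine div_nonneg_iff.2 (Or.inr ⟨?_, hden.le⟩)
      nlinarith [mul_nonneg (sub_nonneg.2 hc2) (sub_nonneg.2 hD)]
  · have hp1 : (1:ℝ) < (p:ℝ)^(2*k-1) := by
      apply one_lt_pow₀ (by exact_mod_cast hp.trans_lt' one_lt_two) (by omega)
    have h1 : (1:ℝ) ≤ (p:ℝ)^((l+1)*(2*k-1)) :=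
      one_le_pow₀ (by exact_mod_cast Nat.one_le_of_lt hp)
    refine div_nonneg_iff.2 (Or.inr ⟨by linarith, by linarith⟩)

lemma rstar_nonneg {k : ℕ} (hk : 0 < k) (n : ℕ) : 0 ≤ rstar k n := by
  unfold rstar
  rw [Finsupp.prod]
  apply Finset.prod_nonneg
  intro p hp
  exact rstarPP_nonneg hk (Nat.prime_of_mem_primeFactors
    (by rwa [Nat.support_factorization] at hp)).two_le _

lemma oneS_nonneg (S : Finset ℕ) (q : ℚ) : 0 ≤ oneS S q := by
  unfold oneS; split <;> norm_num

/-- Sandwiching `T(B)` between telescoping sums of values of `S`. -/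
theorem Tsum_sandwich (k : ℕ) (hk : 0 < k) (S : Finset ℕ) (hS : ∀ p ∈ S, p.Prime)
    (δ : ℝ) (hδ0 : 0 < δ) (hδ1 : δ < 1) (k₀ : ℕ) (hk₀ : 0 < k₀) (B : ℝ) (hB : 0 < B) :
    (∑ l ∈ Finset.Icc 1 k₀,
        (Ssum k S (δ^(l-1) * B) (δ^(3*l) * B^2) - Ssum k S (δ^l * B) (δ^(3*l) * B^2)) ≤
      Tsum k S B) ∧
    Tsum k S B ≤
      Ssum k S (δ^k₀ * B) (δ^(3*k₀) * B^2) +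
        ∑ l ∈ Finset.Icc 1 k₀,
          (Ssum k S (δ^(l-1) * B) (δ^(3*(l-1)) * B^2) -
            Ssum k S (δ^l * B) (δ^(3*(l-1)) * B^2)) := by
    classical
  set g : ℕ → ℝ → ℝ := fun n Y =>
    ∑ d ∈ (n^3).divisors.filter (fun d : ℕ => (d : ℝ) ≤ Y),
      rstar k d * oneS S ((n : ℚ)^2 / (d : ℚ)) with hg
  have hterm : ∀ (n d : ℕ), 0 ≤ rstar k d * oneS S ((n : ℚ)^2 / (d : ℚ)) :=
    fun n d => mul_nonneg (rstar_nonneg hk d) (oneS_nonneg S _)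
  have hgnn : ∀ (n : ℕ) (Y : ℝ), 0 ≤ g n Y :=
    fun n Y => Finset.sum_nonneg fun d _ => hterm n d
  have hgm : ∀ (n : ℕ) (Y Y' : ℝ), Y ≤ Y' → g n Y ≤ g n Y' := by
    intro n Y Y' h
    apply Finset.sum_le_sum_of_subset_of_nonneg
    · intro d hd
      simp only [Finset.mem_filter] at hd ⊢
      exact ⟨hd.1, le_trans hd.2 h⟩
    · intro d _ _; exact hterm n d
  have hIoc : ∀ m : ℕ, Finset.Icc 1 m = Finset.Ioc 0 m := fun m => Finset.Icc_add_one_left_eq_Ioc 0 m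
  have hSeq : ∀ X Y : ℝ, Ssum k S X Y = ∑ n ∈ Finset.Ioc 0 ⌊X⌋₊, g n Y := by
    intro X Y; rw [Ssum, hIoc]
  have hTeq : Tsum k S B = ∑ n ∈ Finset.Ioc 0 ⌊B⌋₊, g n ((n:ℝ)^3 / B) := by
    rw [Tsum, hIoc]
  set m : ℕ → ℕ := fun l => ⌊δ^l * B⌋₊ with hmdef
  have hmle : ∀ {i j : ℕ}, i ≤ j → m j ≤ m i := fun {i j} h =>
    Nat.floor_mono (mul_le_mul_of_nonneg_right
      (pow_le_pow_of_le_one hδ0.le hδ1.le h) hB.le)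
  have hdiff : ∀ (a b : ℕ) (Y : ℝ), a ≤ b →
      (∑ n ∈ Finset.Ioc 0 b, g n Y) - (∑ n ∈ Finset.Ioc 0 a, g n Y)
        = ∑ n ∈ Finset.Ioc a b, g n Y := by
    intro a b Y h
    rw [← Finset.sum_Ioc_consecutive _ (Nat.zero_le a) h]
    ring
  have hcube : ∀ l : ℕ, (δ^l * B)^3 = δ^(3*l) * B^2 * B := by
    intro l; rw [mul_pow, ← pow_mul, mul_comm l 3]; ring
  have hA : ∀ (l n : ℕ), m l < n → δ^(3*l) * B^2 ≤ (n:ℝ)^3 / B := by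
    intro l n hn
    have h1 : δ^l * B < (n:ℝ) := by
      have h3 := Nat.lt_floor_add_one (δ^l * B)
      have h2 : (m l : ℝ) + 1 ≤ (n:ℝ) := by exact_mod_cast hn
      exact lt_of_lt_of_le h3 h2
    rw [le_div_iff₀ hB, ← hcube]
    exact pow_le_pow_left₀ (by positivity) h1.le 3
  have hBd : ∀ (l n : ℕ), n ≤ m l → (n:ℝ)^3 / B ≤ δ^(3*l) * B^2 := by
    intro l n hn
    have h1 : (n:ℝ) ≤ δ^l * B :=
      le_trans (by exact_mod_cast hn) (Nat.floor_le (by positivity))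
    rw [div_le_iff₀ hB, ← hcube]
    exact pow_le_pow_left₀ (by positivity) h1 3
  have claimL : ∀ K : ℕ,
      (∑ l ∈ Finset.Icc 1 K,
        (Ssum k S (δ^(l-1) * B) (δ^(3*l) * B^2) - Ssum k S (δ^l * B) (δ^(3*l) * B^2)))
        ≤ ∑ n ∈ Finset.Ioc (m K) (m 0), g n ((n:ℝ)^3 / B) := by
    intro K
    induction K with
    | zero => simp
    | succ K ih =>
      rw [Finset.sum_Icc_succ_top (by omega : 1 ≤ K + 1)]
      have hsplit := Finset.sum_Ioc_consecutive (fun n => g n ((n:ℝ)^3 / B))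
        (hmle (Nat.le_succ K)) (hmle (Nat.zero_le K))
      have hterm1 : Ssum k S (δ^(K+1-1) * B) (δ^(3*(K+1)) * B^2)
          - Ssum k S (δ^(K+1) * B) (δ^(3*(K+1)) * B^2)
          ≤ ∑ n ∈ Finset.Ioc (m (K+1)) (m K), g n ((n:ℝ)^3 / B) := by
        have h0 : K + 1 - 1 = K := rfl
        rw [h0, hSeq, hSeq, hdiff _ _ _ (hmle (Nat.le_succ K))]
        apply Finset.sum_le_sum
        intro n hn
        exact hgm n _ _ (hA (K+1) n (Finset.mem_Ioc.1 hn).1)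
      calc _ ≤ (∑ n ∈ Finset.Ioc (m K) (m 0), g n ((n:ℝ)^3 / B))
            + ∑ n ∈ Finset.Ioc (m (K+1)) (m K), g n ((n:ℝ)^3 / B) :=
          add_le_add ih hterm1
        _ = _ := by rw [add_comm]; exact hsplit
  have claimU : ∀ K : ℕ,
      (∑ n ∈ Finset.Ioc 0 (m 0), g n ((n:ℝ)^3 / B))
        ≤ (∑ n ∈ Finset.Ioc 0 (m K), g n ((n:ℝ)^3 / B))
          + ∑ l ∈ Finset.Icc 1 K,
            (Ssum k S (δ^(l-1) * B) (δ^(3*(l-1)) * B^2)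
              - Ssum k S (δ^l * B) (δ^(3*(l-1)) * B^2)) := by
    intro K
    induction K with
    | zero => simp
    | succ K ih =>
      rw [Finset.sum_Icc_succ_top (by omega : 1 ≤ K + 1)]
      have hsplit := Finset.sum_Ioc_consecutive (fun n => g n ((n:ℝ)^3 / B))
        (Nat.zero_le (m (K+1))) (hmle (Nat.le_succ K))
      have hterm1 : (∑ n ∈ Finset.Ioc (m (K+1)) (m K), g n ((n:ℝ)^3 / B))
          ≤ Ssum k S (δ^(K+1-1) * B) (δ^(3*(K+1-1)) * B^2)
            - Ssum k S (δ^(K+1) * B) (δ^(3*(K+1-1)) * B^2) := by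
        have h0 : K + 1 - 1 = K := rfl
        rw [h0, hSeq, hSeq, hdiff _ _ _ (hmle (Nat.le_succ K))]
        apply Finset.sum_le_sum
        intro n hn
        exact hgm n _ _ (hBd K n (Finset.mem_Ioc.1 hn).2)
      calc (∑ n ∈ Finset.Ioc 0 (m 0), g n ((n:ℝ)^3 / B))
          ≤ (∑ n ∈ Finset.Ioc 0 (m K), g n ((n:ℝ)^3 / B)) + _ := ih
        _ ≤ _ := by
            rw [← hsplit]
            simp only [Nat.add_sub_cancel] at hterm1 ⊢
            linarith [hterm1]
  have hm0 : ⌊B⌋₊ = m 0 := by simp [hmdef]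
  constructor
  · calc _ ≤ ∑ n ∈ Finset.Ioc (m k₀) (m 0), g n ((n:ℝ)^3 / B) := claimL k₀
      _ ≤ ∑ n ∈ Finset.Ioc 0 (m 0), g n ((n:ℝ)^3 / B) :=
          Finset.sum_le_sum_of_subset_of_nonneg
            (Finset.Ioc_subset_Ioc (Nat.zero_le _) le_rfl)
            (fun n _ _ => hgnn n _)
      _ = Tsum k S B := by rw [hTeq, hm0]
  · have h1 : (∑ n ∈ Finset.Ioc 0 (m k₀), g n ((n:ℝ)^3 / B))
        ≤ Ssum k S (δ^k₀ * B) (δ^(3*k₀) * B^2) := by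
      rw [hSeq]
      apply Finset.sum_le_sum
      intro n hn
      exact hgm n _ _ (hBd k₀ n (Finset.mem_Ioc.1 hn).2)
    have h2 := claimU k₀
    rw [hTeq, hm0]
    linarith
end
end

section
/- Let p be an odd prime with p ∉ S, and let s, w ∈ ℂ with Re s > 15/16 and Re w > 2k − 17/16. Writing x = p^{−s}, y = p^{−w}, z = p^{2k−1}, the series F_p(s,w) converges absolutely and F_p(s,w) = (1 + xy + xyz + xy² + xy²z + xy²z² + xy³z + xy³z² + x²y⁴z²) / ((1 − x)(1 − xy³)(1 − xy³z³)) − xy(1+z) / ((1 − xy²)(1 − xy²z²)). -/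
open scoped BigOperators Classical
open Filter Asymptotics

noncomputable section

/-!
For an odd prime `p` one has `r*_{4k}(p^b) = (z^{b+1} - 1)/(z - 1)`, so
`y^b r*_{4k}(p^b) = (z (yz)^b - y^b)/(z - 1)` and `F_p(s,w)` is a combination of the two series
`∑_a x^a ∑_{b ≤ 3a, b ≠ 2a-1} t^b` with `t = yz` and `t = y`. The terms
`u_a = x^a ∑_{b ≤ 3a} t^b` satisfy `u_{a+1} = x u_a + x t (1 + t + t²) (x t³)^a`, so `u` is the
Cauchy product of geometric series in `x` and in `x t³`. This avoids dividing by `1 - t`, which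
matters because `yz = 1` is allowed. The excluded terms `x^a t^{2a-1}` form a geometric series
in `x t²`.
-/

open Finset

theorem sum_filter_ne_two_mul_sub_one {M : Type*} [AddCommGroup M] (f : ℕ → M) (a : ℕ) :
    ∑ b ∈ (range (3 * a + 1)).filter (fun b : ℕ => (b : ℤ) ≠ 2 * (a : ℤ) - 1), f b
      = ∑ b ∈ range (3 * a + 1), f b - if a = 0 then 0 else f (2 * a - 1) := by
  rcases a with _ | a
  · rw [filter_true_of_mem (by intros; omega), if_pos rfl, sub_zero]
  · have herase :
        (range (3 * (a + 1) + 1)).filter (fun b : ℕ => (b : ℤ) ≠ 2 * ((a + 1 : ℕ) : ℤ) - 1)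
          = (range (3 * (a + 1) + 1)).erase (2 * (a + 1) - 1) := by
      ext b
      simp only [mem_filter, mem_erase, mem_range]
      omega
    rw [herase, sum_erase_eq_sub (mem_range.mpr (by omega)), if_neg a.succ_ne_zero]

section Geometric

variable {𝕜 : Type*} [NormedField 𝕜] {x t : 𝕜}

theorem hasSum_pow_mul_ite_pow_two_mul_sub_one (ht : ‖x * t ^ 2‖ < 1) :
    HasSum (fun a => x ^ a * if a = 0 then 0 else t ^ (2 * a - 1)) (x * t / (1 - x * t ^ 2)) := by
  refine (hasSum_nat_add_iff' 1).mp ?_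
  have h := (hasSum_geometric_of_norm_lt_one ht).mul_left (x * t)
  rw [sum_range_one, if_pos rfl, mul_zero, sub_zero, div_eq_mul_inv]
  refine h.congr_fun fun n => ?_
  rw [if_neg n.succ_ne_zero, show 2 * (n + 1) - 1 = 2 * n + 1 by omega]
  ring

variable [CompleteSpace 𝕜]

theorem hasSum_of_succ_eq_mul_add (hx : ‖x‖ < 1) {u e : ℕ → 𝕜} {s : 𝕜}
    (he : Summable (‖e ·‖)) (hs : HasSum e s) (hsucc : ∀ a, u (a + 1) = x * u a + e a) :
    HasSum u ((u 0 + s) * (1 - x)⁻¹) := by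
  let f : ℕ → 𝕜 := fun
    | 0 => u 0
    | c + 1 => e c
  have hconv : ∀ a, u a = ∑ c ∈ range (a + 1), f c * x ^ (a - c) := by
    intro a
    induction a with
    | zero => simp [f]
    | succ a ih =>
      rw [hsucc, ih, sum_range_succ _ (a + 1), mul_sum, Nat.sub_self, pow_zero, mul_one]
      congr 1
      refine sum_congr rfl fun c hc => ?_
      rw [Nat.sub_add_comm (mem_range_succ_iff.mp hc), pow_succ]
      ring
  have hf : Summable (‖f ·‖) := (summable_nat_add_iff 1).mp he
  have hfs : HasSum f (u 0 + s) := (hasSum_nat_add_iff' 1).mp (by simpa [f] using hs)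
  have hg : Summable (‖x ^ ·‖) := by
    simpa [norm_pow] using summable_geometric_of_lt_one (norm_nonneg x) hx
  have h := hasSum_sum_range_mul_of_summable_norm hf hg
  rwa [hfs.tsum_eq, tsum_geometric_of_norm_lt_one hx, ← funext hconv] at h

theorem hasSum_pow_mul_geom_sum_three_mul (hx : ‖x‖ < 1) (ht : ‖x * t ^ 3‖ < 1) :
    HasSum (fun a => x ^ a * ∑ b ∈ range (3 * a + 1), t ^ b)
      ((1 + x * t + x * t ^ 2) / ((1 - x) * (1 - x * t ^ 3))) := by
  have hrec : ∀ a, x ^ (a + 1) * ∑ b ∈ range (3 * (a + 1) + 1), t ^ b =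
      x * (x ^ a * ∑ b ∈ range (3 * a + 1), t ^ b) + x * t * (1 + t + t ^ 2) * (x * t ^ 3) ^ a := by
    intro a
    rw [show 3 * (a + 1) + 1 = 3 * a + 1 + 1 + 1 + 1 by ring, sum_range_succ, sum_range_succ,
      sum_range_succ]
    ring
  have hnorm : Summable (‖x * t * (1 + t + t ^ 2) * (x * t ^ 3) ^ ·‖) := by
    simp only [norm_mul, norm_pow]
    exact (summable_geometric_of_lt_one (by positivity)
      (by rwa [← norm_pow, ← norm_mul])).mul_left _
  have h := hasSum_of_succ_eq_mul_add (u := fun a => x ^ a * ∑ b ∈ range (3 * a + 1), t ^ b) hx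
    hnorm ((hasSum_geometric_of_norm_lt_one ht).mul_left _) hrec
  have h1 := (isUnit_one_sub_of_norm_lt_one hx).ne_zero
  have h3 := (isUnit_one_sub_of_norm_lt_one ht).ne_zero
  simp only [mul_zero, zero_add, sum_range_one, pow_zero, one_mul] at h
  convert h using 1
  field_simp
  ring

theorem hasSum_pow_mul_sum_filter (hx : ‖x‖ < 1) (ht3 : ‖x * t ^ 3‖ < 1)
    (ht2 : ‖x * t ^ 2‖ < 1) :
    HasSum
      (fun a => x ^ a * ∑ b ∈ (range (3 * a + 1)).filter (fun b : ℕ => (b : ℤ) ≠ 2 * (a : ℤ) - 1),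
        t ^ b)
      ((1 + x * t + x * t ^ 2) / ((1 - x) * (1 - x * t ^ 3)) - x * t / (1 - x * t ^ 2)) := by
  refine ((hasSum_pow_mul_geom_sum_three_mul hx ht3).sub
    (hasSum_pow_mul_ite_pow_two_mul_sub_one ht2)).congr_fun fun a => ?_
  rw [sum_filter_ne_two_mul_sub_one, mul_sub]

end Geometric

theorem rstar_prime_pow_of_ne_two {k p : ℕ} (hk : 0 < k) (hp : p.Prime) (hp2 : p ≠ 2) (b : ℕ) :
    rstar k (p ^ b) = (((p : ℝ) ^ (2 * k - 1)) ^ (b + 1) - 1) / ((p : ℝ) ^ (2 * k - 1) - 1) := by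
  have hz : (p : ℝ) ^ (2 * k - 1) ≠ 1 :=
    (one_lt_pow₀ (by exact_mod_cast hp.one_lt) (by omega)).ne'
  have h0 : rstarPP k p 0 = 1 := by
    rw [rstarPP, if_neg (by simp), zero_add, one_mul, div_self (sub_ne_zero.mpr hz.symm)]
  rw [rstar, hp.factorization_pow, Finsupp.prod_single_index h0, rstarPP,
    if_neg (fun h => hp2 h.1), ← pow_mul', ← neg_sub, ← neg_sub _ (1 : ℝ), neg_div_neg_eq]

theorem FpTerm_eq_of_not_mem {k p : ℕ} (hk : 0 < k) (hp : p.Prime) (hp2 : p ≠ 2) {S : Finset ℕ}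
    (hpS : p ∉ S) {s w x y z : ℂ} (hx : x = (p : ℂ) ^ (-s)) (hy : y = (p : ℂ) ^ (-w))
    (hz : z = (p : ℂ) ^ (2 * k - 1)) (a : ℕ) :
    FpTerm k S p s w a =
      (z * (x ^ a * ∑ b ∈ (range (3 * a + 1)).filter (fun b : ℕ => (b : ℤ) ≠ 2 * (a : ℤ) - 1),
          (y * z) ^ b) -
        x ^ a * ∑ b ∈ (range (3 * a + 1)).filter (fun b : ℕ => (b : ℤ) ≠ 2 * (a : ℤ) - 1),
          y ^ b) / (z - 1) := by
  have hpow : ∀ (n : ℕ) (u : ℂ), (p : ℂ) ^ (-(n : ℂ) * u) = ((p : ℂ) ^ (-u)) ^ n := fun n u => by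
    rw [neg_mul_comm, Complex.cpow_nat_mul]
  simp only [FpTerm, if_neg hpS, hpow, ← hx, ← hy, rstar_prime_pow_of_ne_two hk hp hp2]
  push_cast
  rw [← hz]
  simp only [mul_sum, ← sum_sub_distrib, sum_div]
  refine sum_congr rfl fun b _ => ?_
  ring

theorem norm_mul_pow_lt_one {q α β : ℝ} (hq : 1 < q) {x t : ℂ} (hx : ‖x‖ = q ^ α)
    (ht : ‖t‖ = q ^ β) {m : ℕ} (h : α + m * β < 0) : ‖x * t ^ m‖ < 1 := by
  have hq0 : 0 ≤ q := by linarith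
  rw [norm_mul, norm_pow, hx, ht, ← Real.rpow_natCast, ← Real.rpow_mul hq0,
    ← Real.rpow_add (by linarith), mul_comm β]
  exact Real.rpow_lt_one_of_one_lt_of_neg hq h

theorem combine_local_series_eq {K : Type*} [Field K] {x y z : K} (hz : z ≠ 1) (h1 : 1 - x ≠ 0)
    (h2 : 1 - x * y ^ 2 ≠ 0) (h3 : 1 - x * y ^ 3 ≠ 0) (h4 : 1 - x * (y * z) ^ 2 ≠ 0)
    (h5 : 1 - x * (y * z) ^ 3 ≠ 0) :
    (z * ((1 + x * (y * z) + x * (y * z) ^ 2) / ((1 - x) * (1 - x * (y * z) ^ 3)) -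
        x * (y * z) / (1 - x * (y * z) ^ 2)) -
      ((1 + x * y + x * y ^ 2) / ((1 - x) * (1 - x * y ^ 3)) - x * y / (1 - x * y ^ 2))) / (z - 1) =
    (1 + x*y + x*y*z + x*y^2 + x*y^2*z + x*y^2*z^2 + x*y^3*z + x*y^3*z^2 + x^2*y^4*z^2) /
        ((1 - x) * (1 - x*y^3) * (1 - x*y^3*z^3)) -
      x*y*(1 + z) / ((1 - x*y^2) * (1 - x*y^2*z^2)) := by
  simp only [mul_pow] at h4 h5 ⊢
  rw [show x * (y ^ 2 * z ^ 2) = z ^ 2 * x * y ^ 2 by ring] at h4 ⊢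
  rw [show x * (y ^ 3 * z ^ 3) = z ^ 3 * x * y ^ 3 by ring] at h5 ⊢
  have hz' := sub_ne_zero.mpr hz
  field_simp
  ring

theorem Fp_eq_of_not_mem_general (k : ℕ) (hk : 0 < k) (S : Finset ℕ)
    (p : ℕ) (hp : p.Prime) (hp2 : p ≠ 2) (hpS : p ∉ S) (s w : ℂ)
    (hs : 15/16 < s.re) (hw : 2 * (k : ℝ) - 17/16 < w.re)
    (x y z : ℂ) (hx : x = (p : ℂ)^(-s)) (hy : y = (p : ℂ)^(-w))
    (hz : z = ((p : ℂ))^(2*k-1)) :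
    Summable (FpTerm k S p s w) ∧
    Fp k S p s w =
      (1 + x*y + x*y*z + x*y^2 + x*y^2*z + x*y^2*z^2 + x*y^3*z + x*y^3*z^2 + x^2*y^4*z^2) /
        ((1 - x) * (1 - x*y^3) * (1 - x*y^3*z^3)) -
      x*y*(1 + z) / ((1 - x*y^2) * (1 - x*y^2*z^2)) := by
  have hq : (1 : ℝ) < p := by exact_mod_cast hp.one_lt
  have hexp : ((2 * k - 1 : ℕ) : ℝ) = 2 * k - 1 := by
    rw [Nat.cast_sub (by omega)]
    push_cast
    ring
  have hnx : ‖x‖ = (p : ℝ) ^ (-s.re) := by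
    rw [hx, Complex.norm_natCast_cpow_of_pos hp.pos, Complex.neg_re]
  have hny : ‖y‖ = (p : ℝ) ^ (-w.re) := by
    rw [hy, Complex.norm_natCast_cpow_of_pos hp.pos, Complex.neg_re]
  have hnz : ‖z‖ = (p : ℝ) ^ ((2 * k - 1 : ℕ) : ℝ) := by
    rw [hz, norm_pow, Complex.norm_natCast, Real.rpow_natCast]
  have hnyz : ‖y * z‖ = (p : ℝ) ^ (-w.re + (2 * k - 1 : ℕ)) := by
    rw [norm_mul, hny, hnz, Real.rpow_add (by linarith)]
  have hz1 : z ≠ 1 := by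
    refine ne_of_apply_ne norm ?_
    rw [norm_one, hz, norm_pow, Complex.norm_natCast]
    exact (one_lt_pow₀ hq (by omega)).ne'
  have hx1 : ‖x‖ < 1 := by rw [hnx]; exact Real.rpow_lt_one_of_one_lt_of_neg hq (by linarith)
  have hy2 : ‖x * y ^ 2‖ < 1 := norm_mul_pow_lt_one hq hnx hny (by push_cast; linarith)
  have hy3 : ‖x * y ^ 3‖ < 1 := norm_mul_pow_lt_one hq hnx hny (by push_cast; linarith)
  have hyz2 : ‖x * (y * z) ^ 2‖ < 1 :=
    norm_mul_pow_lt_one hq hnx hnyz (by push_cast [hexp]; linarith)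
  have hyz3 : ‖x * (y * z) ^ 3‖ < 1 :=
    norm_mul_pow_lt_one hq hnx hnyz (by push_cast [hexp]; linarith)
  have hsum := (((hasSum_pow_mul_sum_filter hx1 hyz3 hyz2).mul_left z).sub
    (hasSum_pow_mul_sum_filter hx1 hy3 hy2)).div_const (z - 1)
  simp only [← FpTerm_eq_of_not_mem hk hp hp2 hpS hx hy hz] at hsum
  refine ⟨hsum.summable, ?_⟩
  rw [Fp, hsum.tsum_eq]
  have hne {u : ℂ} (hu : ‖u‖ < 1) : 1 - u ≠ 0 := (isUnit_one_sub_of_norm_lt_one hu).ne_zero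
  exact combine_local_series_eq hz1 (hne hx1) (hne hy2) (hne hy3) (hne hyz2) (hne hyz3)

/-- Euler factor at an odd prime `p ∉ S`: absolute convergence and rational expression
for `F_p(s,w)` with `x = p^{-s}`, `y = p^{-w}`, `z = p^{2k-1}`. -/
theorem Fp_eq_of_not_mem (k : ℕ) (hk : 0 < k) (S : Finset ℕ) (hS : ∀ p ∈ S, p.Prime)
    (p : ℕ) (hp : p.Prime) (hp2 : p ≠ 2) (hpS : p ∉ S) (s w : ℂ)
    (hs : 15/16 < s.re) (hw : 2 * (k : ℝ) - 17/16 < w.re)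
    (x y z : ℂ) (hx : x = (p : ℂ)^(-s)) (hy : y = (p : ℂ)^(-w))
    (hz : z = ((p : ℂ))^(2*k-1)) :
    Summable (FpTerm k S p s w) ∧
    Fp k S p s w =
      (1 + x*y + x*y*z + x*y^2 + x*y^2*z + x*y^2*z^2 + x*y^3*z + x*y^3*z^2 + x^2*y^4*z^2) /
        ((1 - x) * (1 - x*y^3) * (1 - x*y^3*z^3)) -
      x*y*(1 + z) / ((1 - x*y^2) * (1 - x*y^2*z^2)) :=
  Fp_eq_of_not_mem_general k hk S p hp hp2 hpS s w hs hw x y z hx hy hz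
end
end

section
/- There exists a constant C > 0 such that for every prime p with p ∉ S and p ≠ 2, and for all s, w ∈ ℂ with Re s ≥ 15/16 and Re w ≥ 2k − 17/16, one has |G_p(s,w) − 1| ≤ C·p^{−5/4}. -/
open scoped BigOperators Classical
open Filter Asymptotics

noncomputable section

/-!
Write `u = p^{-s}`, `v = p^{-w}`, `t = p^{2k-1}` and `x = p^{-1/16}`. For odd `p` one has
`r*_{4k}(p^b) = 1 + t + ⋯ + t^b`, so `F_p` is a sum of monomials `u^a v^b t^j` with
`j ≤ b ≤ 3a`, and on the given region such a monomial has norm at most `x^{15a + 15b - 16j}`.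
The term `a = 0` is `1`. The term `a = 1`, in which `b = 1` is omitted since `p ∉ S`, is
`u + u v² t² + u v³ t³` up to monomials of norm `≤ x^{28}`, and these three leading monomials
(of norm `≤ x^{12}`) are exactly the ones the three Euler factors of `G_p` cancel to first order.
The terms `a ≥ 2` contribute `O(x^{24})`, uniformly in `p` because `x ≤ 2^{-1/16} < 1`.
Hence `G_p - 1 = O(x^{20}) = O(p^{-5/4})`.
-/

open Finset

lemma norm_prod_one_sub_mul_one_add_sub_one_le {R : Type*} [NormedCommRing R]
    [NormOneClass R] {X Y Z E : R} {ρ : ℝ} (hX : ‖X‖ ≤ ρ) (hY : ‖Y‖ ≤ ρ) (hZ : ‖Z‖ ≤ ρ)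
    (hρ : ρ ≤ 1) :
    ‖(1 - X) * (1 - Y) * (1 - Z) * (1 + X + Y + Z + E) - 1‖ ≤ 25 * ρ ^ 2 + 8 * ‖E‖ := by
  have hρ0 : 0 ≤ ρ := (norm_nonneg X).trans hX
  have h1 : ‖X + Y + Z‖ ≤ 3 * ρ := norm_add₃_le.trans (by linarith)
  have h2 : ‖X * Y + Y * Z + Z * X‖ ≤ 3 * ρ ^ 2 := norm_add₃_le.trans (by
    linarith [norm_mul_le_of_le hX hY, norm_mul_le_of_le hY hZ, norm_mul_le_of_le hZ hX])
  have h3 : ‖X * Y * Z‖ ≤ ρ ^ 3 :=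
    (norm_mul_le_of_le (norm_mul_le_of_le hX hY) hZ).trans_eq (by ring)
  have h1' : ‖1 + (X + Y + Z)‖ ≤ 4 := (norm_add_le _ _).trans (by rw [norm_one]; linarith)
  have hone_sub (W : R) (hW : ‖W‖ ≤ ρ) : ‖1 - W‖ ≤ 2 :=
    (norm_sub_le _ _).trans (by rw [norm_one]; linarith)
  have hA : ‖(1 - X) * (1 - Y) * (1 - Z)‖ ≤ 8 :=
    (norm_mul_le_of_le (norm_mul_le_of_le (hone_sub X hX) (hone_sub Y hY)) (hone_sub Z hZ)).trans_eq
      (by norm_num)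
  have hsecond : ‖(X * Y + Y * Z + Z * X) * (1 + (X + Y + Z)) - (X + Y + Z) * (X + Y + Z)
      - X * Y * Z * (1 + (X + Y + Z))‖ ≤ 25 * ρ ^ 2 := by
    calc _ ≤ 3 * ρ ^ 2 * 4 + 3 * ρ * (3 * ρ) + ρ ^ 3 * 4 :=
          (norm_sub_le _ _).trans <| add_le_add ((norm_sub_le _ _).trans <| add_le_add
            (norm_mul_le_of_le h2 h1') (norm_mul_le_of_le h1 h1)) (norm_mul_le_of_le h3 h1')
      _ ≤ 25 * ρ ^ 2 := by nlinarith [pow_le_pow_of_le_one hρ0 hρ (show 2 ≤ 3 by norm_num)]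
  have hexp : (1 - X) * (1 - Y) * (1 - Z) * (1 + X + Y + Z + E) - 1 =
      ((X * Y + Y * Z + Z * X) * (1 + (X + Y + Z)) - (X + Y + Z) * (X + Y + Z)
        - X * Y * Z * (1 + (X + Y + Z))) + (1 - X) * (1 - Y) * (1 - Z) * E := by ring
  rw [hexp]
  exact (norm_add_le _ _).trans (add_le_add hsecond (norm_mul_le_of_le hA le_rfl))

lemma summable_sq_mul_geometric {q : ℝ} (hq0 : 0 ≤ q) (hq : q < 1) (c d : ℝ) :
    Summable (fun n : ℕ => (c * n + d) ^ 2 * q ^ n) := by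
  have hq' : ‖q‖ < 1 := by rwa [Real.norm_of_nonneg hq0]
  have h := fun k => summable_pow_mul_geometric_of_norm_lt_one k hq'
  refine ((((h 2).mul_left (c ^ 2)).add ((h 1).mul_left (2 * c * d))).add
    ((h 0).mul_left (d ^ 2))).congr fun n => ?_
  ring

def tailConst (r : ℝ) : ℝ := ∑' a : ℕ, (3 * a + 7) ^ 2 * (r ^ 12) ^ a

lemma tailConst_nonneg (r : ℝ) : 0 ≤ tailConst r := tsum_nonneg fun a => by positivity

lemma rstarPP_eq_geom_sum {k p : ℕ} (hp : 1 < p) (hp2 : p ≠ 2) (hk : 0 < k) (l : ℕ) :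
    rstarPP k p l = ∑ j ∈ range (l + 1), ((p : ℝ) ^ (2 * k - 1)) ^ j := by
  have hP : (p : ℝ) ^ (2 * k - 1) ≠ 1 :=
    (one_lt_pow₀ (by exact_mod_cast hp) (by omega)).ne'
  rw [rstarPP, if_neg (by tauto), geom_sum_eq hP, mul_comm, pow_mul, ← neg_div_neg_eq]
  ring_nf

lemma rstar_prime_pow {k p : ℕ} (hp : p.Prime) (hp2 : p ≠ 2) (hk : 0 < k) (b : ℕ) :
    rstar k (p ^ b) = ∑ j ∈ range (b + 1), ((p : ℝ) ^ (2 * k - 1)) ^ j := by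
  have h0 : rstarPP k p 0 = 1 := by simp [rstarPP_eq_geom_sum hp.one_lt hp2 hk]
  rw [rstar, hp.factorization_pow, Finsupp.prod_single_index h0,
    rstarPP_eq_geom_sum hp.one_lt hp2 hk]

section LocalFactor

variable (u v t : ℂ)

def localTerm (a : ℕ) : ℂ :=
  u ^ a * ∑ b ∈ (range (3 * a + 1)).filter (fun b : ℕ => (b : ℤ) ≠ 2 * (a : ℤ) - 1),
    v ^ b * ∑ j ∈ range (b + 1), t ^ j

def localFactor : ℂ :=
  (1 - u) * (1 - u * v ^ 2 * t ^ 2) * (1 - u * v ^ 3 * t ^ 3) * ∑' a, localTerm u v t a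

lemma localTerm_zero : localTerm u v t 0 = 1 := by
  simp [localTerm]

lemma localTerm_one : localTerm u v t 1 = u + u * v ^ 2 * t ^ 2 + u * v ^ 3 * t ^ 3 +
    (u * v ^ 2 + u * v ^ 2 * t + u * v ^ 3 + u * v ^ 3 * t + u * v ^ 3 * t ^ 2) := by
  simp only [localTerm, pow_one, Nat.cast_one, mul_one, Int.reduceSub, ne_eq, Nat.cast_eq_one,
    Nat.reduceAdd, sum_range_succ, sum_filter, ite_not, range_one, sum_singleton, zero_ne_one,
    ↓reduceIte, pow_zero, range_zero, sum_empty, zero_add, add_zero, OfNat.ofNat_ne_one]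
  ring

end LocalFactor

/-- The region `Re s ≥ 15/16`, `Re w ≥ 2k - 17/16` in the variables `u = p^{-s}`, `v = p^{-w}`,
`t = p^{2k-1}`, with `x = p^{-1/16}`; the last field says `‖v t‖ ≤ p^{1/16}`. -/
structure LocalBounds (x : ℝ) (u v t : ℂ) : Prop where
  pos : 0 < x
  lt_one : x < 1
  norm_u_le : ‖u‖ ≤ x ^ 15
  norm_v_le : ‖v‖ ≤ x ^ 15
  mul_norm_mul_le : x * ‖v * t‖ ≤ 1

namespace LocalBounds

variable {x : ℝ} {u v t : ℂ}

lemma norm_monomial_le (h : LocalBounds x u v t) {a b j n : ℕ} (hj : j ≤ b)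
    (hn : n + 16 * j ≤ 15 * a + 15 * b) : ‖u ^ a * v ^ b * t ^ j‖ ≤ x ^ n := by
  have hsplit : u ^ a * v ^ b * t ^ j = u ^ a * v ^ (b - j) * (v * t) ^ j := by
    rw [mul_pow, mul_assoc, mul_assoc, ← mul_assoc (v ^ (b - j)), ← pow_add,
      Nat.sub_add_cancel hj]
  have hx := h.pos
  have key : x ^ j * ‖u ^ a * v ^ b * t ^ j‖ ≤ x ^ j * x ^ n := by
    calc x ^ j * ‖u ^ a * v ^ b * t ^ j‖
        = ‖u‖ ^ a * ‖v‖ ^ (b - j) * (x * ‖v * t‖) ^ j := by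
          rw [hsplit, norm_mul, norm_mul, norm_pow, norm_pow, norm_pow, mul_pow]; ring
      _ ≤ (x ^ 15) ^ a * (x ^ 15) ^ (b - j) * 1 ^ j := by
          gcongr
          exacts [h.norm_u_le, h.norm_v_le, h.mul_norm_mul_le]
      _ = x ^ (15 * a + 15 * (b - j)) := by rw [one_pow, mul_one, ← pow_mul, ← pow_mul, pow_add]
      _ ≤ x ^ j * x ^ n := by
          rw [← pow_add]
          exact pow_le_pow_of_le_one hx.le h.lt_one.le (by omega)
  exact le_of_mul_le_mul_left key (by positivity)

lemma norm_localTerm_le (h : LocalBounds x u v t) (a : ℕ) :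
    ‖localTerm u v t a‖ ≤ (3 * a + 1) ^ 2 * x ^ (12 * a) := by
  set B := (range (3 * a + 1)).filter (fun b : ℕ => (b : ℤ) ≠ 2 * (a : ℤ) - 1)
  have hx := h.pos
  calc ‖localTerm u v t a‖
      = ‖∑ b ∈ B, ∑ j ∈ range (b + 1), u ^ a * v ^ b * t ^ j‖ := by
        simp only [localTerm, mul_sum, mul_assoc, B]
    _ ≤ ∑ b ∈ B, ∑ j ∈ range (b + 1), ‖u ^ a * v ^ b * t ^ j‖ :=
        (norm_sum_le _ _).trans (sum_le_sum fun b _ => norm_sum_le _ _)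
    _ ≤ ∑ b ∈ B, ∑ j ∈ range (3 * a + 1), x ^ (12 * a) := by
        refine sum_le_sum fun b hb => ?_
        have hb : b < 3 * a + 1 := mem_range.mp (mem_filter.mp hb).1
        refine (sum_le_sum fun j hj => h.norm_monomial_le (n := 12 * a) ?_ ?_).trans ?_
        · exact Nat.lt_succ_iff.mp (mem_range.mp hj)
        · have := mem_range.mp hj; omega
        · exact sum_le_sum_of_subset_of_nonneg (range_subset_range.mpr (by omega))
            fun _ _ _ => by positivity
    _ ≤ ∑ b ∈ range (3 * a + 1), ∑ j ∈ range (3 * a + 1), x ^ (12 * a) :=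
        sum_le_sum_of_subset_of_nonneg (filter_subset _ _) fun _ _ _ => by positivity
    _ = (3 * a + 1) ^ 2 * x ^ (12 * a) := by
        simp only [sum_const, card_range, nsmul_eq_mul]; push_cast; ring

lemma summable_localTerm (h : LocalBounds x u v t) : Summable (localTerm u v t) := by
  have hq : x ^ 12 < 1 := pow_lt_one₀ h.pos.le h.lt_one (by norm_num)
  refine (summable_sq_mul_geometric (by positivity) hq 3 1).of_norm_bounded fun a => ?_
  simpa only [pow_mul] using h.norm_localTerm_le a

lemma norm_tsum_localTerm_add_two_le (h : LocalBounds x u v t) {r : ℝ} (hxr : x ≤ r)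
    (hr : r < 1) :
    ‖∑' a, localTerm u v t (a + 2)‖ ≤ tailConst r * x ^ 24 := by
  have hx := h.pos
  have hbound (a : ℕ) :
      ‖localTerm u v t (a + 2)‖ ≤ x ^ 24 * ((3 * a + 7) ^ 2 * (r ^ 12) ^ a) := by
    calc ‖localTerm u v t (a + 2)‖ ≤ (3 * ↑(a + 2) + 1) ^ 2 * x ^ (12 * (a + 2)) :=
          h.norm_localTerm_le (a + 2)
      _ = x ^ 24 * ((3 * a + 7) ^ 2 * (x ^ 12) ^ a) := by push_cast; ring
      _ ≤ x ^ 24 * ((3 * a + 7) ^ 2 * (r ^ 12) ^ a) := by gcongr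
  have hsum := (summable_sq_mul_geometric (q := r ^ 12) (by positivity)
    (pow_lt_one₀ (hx.le.trans hxr) hr (by norm_num)) 3 7).mul_left (x ^ 24)
  calc ‖∑' a, localTerm u v t (a + 2)‖
      ≤ ∑' a : ℕ, x ^ 24 * ((3 * a + 7) ^ 2 * (r ^ 12) ^ a) :=
        tsum_of_norm_bounded hsum.hasSum hbound
    _ = tailConst r * x ^ 24 := by rw [tsum_mul_left, mul_comm, tailConst]

theorem norm_localFactor_sub_one_le (h : LocalBounds x u v t) {r : ℝ} (hxr : x ≤ r)
    (hr : r < 1) : ‖localFactor u v t - 1‖ ≤ (65 + 8 * tailConst r) * x ^ 20 := by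
  have hx := h.pos
  have hmono (b j n : ℕ) (hj : j ≤ b) (hn : n + 16 * j ≤ 15 + 15 * b) :
      ‖u * v ^ b * t ^ j‖ ≤ x ^ n := by
    simpa using h.norm_monomial_le (a := 1) hj hn
  set E := u * v ^ 2 + u * v ^ 2 * t + u * v ^ 3 + u * v ^ 3 * t + u * v ^ 3 * t ^ 2
  set R := ∑' a, localTerm u v t (a + 2)
  have hE : ‖E‖ ≤ 5 * x ^ 20 := by
    have h₁ := hmono 2 0 20 (by norm_num) (by norm_num)
    have h₂ := hmono 2 1 20 (by norm_num) (by norm_num)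
    have h₃ := hmono 3 0 20 (by norm_num) (by norm_num)
    have h₄ := hmono 3 1 20 (by norm_num) (by norm_num)
    have h₅ := hmono 3 2 20 (by norm_num) (by norm_num)
    simp only [pow_zero, pow_one, mul_one] at h₁ h₂ h₃ h₄ h₅
    exact (norm_add_le _ _).trans ((add_le_add norm_add₄_le le_rfl).trans (by linarith))
  have hR : ‖R‖ ≤ tailConst r * x ^ 20 :=
    (h.norm_tsum_localTerm_add_two_le hxr hr).trans (mul_le_mul_of_nonneg_left
      (pow_le_pow_of_le_one hx.le h.lt_one.le (by norm_num)) (tailConst_nonneg r))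
  have hsplit : localFactor u v t = (1 - u) * (1 - u * v ^ 2 * t ^ 2) * (1 - u * v ^ 3 * t ^ 3) *
      (1 + u + u * v ^ 2 * t ^ 2 + u * v ^ 3 * t ^ 3 + (E + R)) := by
    rw [localFactor, ← h.summable_localTerm.sum_add_tsum_nat_add 2, sum_range_succ,
      sum_range_one, localTerm_zero, localTerm_one]
    ring
  have hX : ‖u‖ ≤ x ^ 12 := by simpa using hmono 0 0 12 le_rfl (by norm_num)
  rw [hsplit]
  refine (norm_prod_one_sub_mul_one_add_sub_one_le hX (hmono 2 2 12 le_rfl (by norm_num))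
    (hmono 3 3 12 le_rfl (by norm_num)) (pow_le_one₀ hx.le h.lt_one.le)).trans ?_
  have h24 : (x ^ 12) ^ 2 ≤ x ^ 20 := by
    rw [← pow_mul]; exact pow_le_pow_of_le_one hx.le h.lt_one.le (by norm_num)
  nlinarith [norm_add_le E R]

end LocalBounds

lemma Gp_eq_localFactor {k p : ℕ} {S : Finset ℕ} (hp : p.Prime) (hpS : p ∉ S) (hp2 : p ≠ 2)
    (hk : 0 < k) (s w : ℂ) :
    Gp k S p s w = localFactor ((p : ℂ) ^ (-s)) ((p : ℂ) ^ (-w)) ((p : ℂ) ^ (2 * k - 1)) := by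
  have hp0 : (p : ℂ) ≠ 0 := Nat.cast_ne_zero.mpr hp.ne_zero
  have hcpow (n : ℕ) (z : ℂ) : (p : ℂ) ^ (-(n : ℂ) * z) = ((p : ℂ) ^ (-z)) ^ n := by
    rw [show -(n : ℂ) * z = n * (-z) by ring, Complex.cpow_nat_mul]
  have hterm : FpTerm k S p s w = localTerm ((p : ℂ) ^ (-s)) ((p : ℂ) ^ (-w))
      ((p : ℂ) ^ (2 * k - 1)) := funext fun a => by
    rw [FpTerm, if_neg hpS, localTerm, hcpow]
    refine congrArg _ (sum_congr rfl fun b _ => ?_)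
    rw [hcpow, rstar_prime_pow hp hp2 hk]
    push_cast
    rfl
  have hfactor (m : ℕ) : (p : ℂ) ^ (-(s + m * (w - 2 * (k : ℂ) + 1))) =
      (p : ℂ) ^ (-s) * ((p : ℂ) ^ (-w)) ^ m * ((p : ℂ) ^ (2 * k - 1)) ^ m := by
    have hexp : -(s + m * (w - 2 * (k : ℂ) + 1)) =
        -s + (m * (-w) + m * ((2 * k - 1 : ℕ) : ℂ)) := by
      rw [Nat.cast_sub (by omega)]; push_cast; ring
    rw [hexp, Complex.cpow_add _ _ hp0, Complex.cpow_add _ _ hp0, Complex.cpow_nat_mul,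
      Complex.cpow_nat_mul, Complex.cpow_natCast, mul_assoc]
  have h2 := hfactor 2
  have h3 := hfactor 3
  push_cast at h2 h3
  rw [Gp, Fp, hterm, localFactor, h2, h3]

lemma rpow_neg_one_div_sixteen_pow {y : ℝ} (hy : 0 ≤ y) (n : ℕ) :
    (y ^ (-(1 / 16) : ℝ)) ^ n = y ^ (-(n / 16) : ℝ) := by
  rw [← Real.rpow_natCast, ← Real.rpow_mul hy]
  ring_nf

lemma localBounds_cpow {k p : ℕ} (hp : 1 < p) (hk : 0 < k) {s w : ℂ} (hs : 15 / 16 ≤ s.re)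
    (hw : 2 * (k : ℝ) - 17 / 16 ≤ w.re) :
    LocalBounds ((p : ℝ) ^ (-(1 / 16) : ℝ)) ((p : ℂ) ^ (-s)) ((p : ℂ) ^ (-w))
      ((p : ℂ) ^ (2 * k - 1)) := by
  have hp1 : (1 : ℝ) < p := by exact_mod_cast hp
  have hp0 : (0 : ℝ) < p := by positivity
  have hk1 : (1 : ℝ) ≤ k := by exact_mod_cast hk
  have hnorm (z : ℂ) : ‖(p : ℂ) ^ z‖ = (p : ℝ) ^ z.re :=
    Complex.norm_natCast_cpow_of_pos (by omega) z
  have hmono {a b : ℝ} (hab : a ≤ b) : (p : ℝ) ^ a ≤ (p : ℝ) ^ b :=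
    Real.rpow_le_rpow_of_exponent_le hp1.le hab
  refine ⟨by positivity, Real.rpow_lt_one_of_one_lt_of_neg hp1 (by norm_num), ?_, ?_, ?_⟩
  · rw [hnorm, rpow_neg_one_div_sixteen_pow hp0.le, Complex.neg_re]
    exact hmono (by push_cast; linarith)
  · rw [hnorm, rpow_neg_one_div_sixteen_pow hp0.le, Complex.neg_re]
    exact hmono (by push_cast; linarith)
  · have ht : ‖(p : ℂ) ^ (2 * k - 1)‖ = (p : ℝ) ^ (2 * (k : ℝ) - 1) := by
      rw [norm_pow, Complex.norm_natCast, ← Real.rpow_natCast, Nat.cast_sub (by omega)]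
      push_cast
      ring_nf
    rw [norm_mul, hnorm, ht, Complex.neg_re, ← mul_assoc, ← Real.rpow_add hp0,
      ← Real.rpow_add hp0]
    exact Real.rpow_le_one_of_one_le_of_nonpos hp1.le (by linarith)

theorem Gp_sub_one_bound_general (k : ℕ) (hk : 0 < k) (S : Finset ℕ) :
    ∃ C > 0, ∀ p : ℕ, p.Prime → p ∉ S → p ≠ 2 → ∀ s w : ℂ,
      15/16 ≤ s.re → 2 * (k : ℝ) - 17/16 ≤ w.re →
      ‖Gp k S p s w - 1‖ ≤ C * (p : ℝ)^(-(5/4 : ℝ)) := by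
  set r : ℝ := 2 ^ (-(1 / 16) : ℝ)
  refine ⟨65 + 8 * tailConst r, by linarith [tailConst_nonneg r], fun p hp hpS hp2 s w hs hw => ?_⟩
  have hp0 : (0 : ℝ) ≤ p := Nat.cast_nonneg p
  have hxr : (p : ℝ) ^ (-(1 / 16) : ℝ) ≤ r :=
    Real.rpow_le_rpow_of_nonpos (by norm_num) (by exact_mod_cast hp.two_le) (by norm_num)
  have hr : r < 1 := Real.rpow_lt_one_of_one_lt_of_neg (by norm_num) (by norm_num)
  have h20 : (p : ℝ) ^ (-(5 / 4 : ℝ)) = ((p : ℝ) ^ (-(1 / 16) : ℝ)) ^ 20 := by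
    rw [rpow_neg_one_div_sixteen_pow hp0]; norm_num
  rw [Gp_eq_localFactor hp hpS hp2 hk, h20]
  exact (localBounds_cpow hp.one_lt hk hs hw).norm_localFactor_sub_one_le hxr hr

/-- Uniform estimate `G_p(s,w) = 1 + O(p^{-5/4})` on `Re s ≥ 15/16`, `Re w ≥ 2k − 17/16`,
for primes `p ∉ S ∪ {2}`. -/
theorem Gp_sub_one_bound (k : ℕ) (hk : 0 < k) (S : Finset ℕ) (hS : ∀ p ∈ S, p.Prime) :
    ∃ C > 0, ∀ p : ℕ, p.Prime → p ∉ S → p ≠ 2 → ∀ s w : ℂ,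
      15/16 ≤ s.re → 2 * (k : ℝ) - 17/16 ≤ w.re →
      ‖Gp k S p s w - 1‖ ≤ C * (p : ℝ)^(-(5/4 : ℝ)) :=
  Gp_sub_one_bound_general k hk S
end
end

section
/- Let k be a positive integer and let H, X, β, σ, τ be real numbers with 0 < H ≤ X, |σ| ≤ 3k, and 0 ≤ β ≤ 1. Then |(X+H)^{σ+iτ} − X^{σ+iτ}| ≤ 2^{10k}·X^{σ−β}·(|τ|+1)^β·H^β, where for a positive real t and complex exponent u, t^u denotes the principal complex power exp(u·log t). -/
open scoped BigOperators Classical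
open Filter Asymptotics

noncomputable section

/-! For `x = X ≤ y = X + H ≤ 2X` and `s = σ + iτ`, the mean value theorem bounds
`|y^s - x^s|` by `|s| 2^{|σ-1|} X^{σ-1} H`, and the triangle inequality bounds it by
`(2^{|σ|} + 1) X^σ`. Both are at most `2^{10k} X^σ` times `r = (|τ|+1)H/X` and `1`
respectively, and `min r 1 ≤ r^β` for `β ∈ [0, 1]` interpolates between them. -/

open Complex

lemma rpow_le_two_rpow_abs_mul_rpow {x t : ℝ} (a : ℝ) (hx : 0 < x) (hxt : x ≤ t)
    (ht : t ≤ 2 * x) : t ^ a ≤ 2 ^ |a| * x ^ a := by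
  rcases le_or_gt 0 a with ha | ha
  · calc t ^ a ≤ (2 * x) ^ a := Real.rpow_le_rpow (hx.le.trans hxt) ht ha
      _ = 2 ^ a * x ^ a := Real.mul_rpow zero_le_two hx.le
      _ ≤ 2 ^ |a| * x ^ a := by
          gcongr
          exacts [one_le_two, le_abs_self a]
  · calc t ^ a ≤ 1 * x ^ a := by rw [one_mul]; exact Real.rpow_le_rpow_of_nonpos hx hxt ha.le
      _ ≤ 2 ^ |a| * x ^ a := by gcongr; exact Real.one_le_rpow one_le_two (abs_nonneg a)

lemma hasDerivAt_ofReal_cpow_const_of_pos {t : ℝ} (ht : 0 < t) (s : ℂ) :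
    HasDerivAt (fun y : ℝ => (y : ℂ) ^ s) (s * (t : ℂ) ^ (s - 1)) t := by
  simpa using ((hasDerivAt_id (t : ℂ)).cpow_const (ofReal_mem_slitPlane.mpr ht)).comp_ofReal

lemma norm_ofReal_cpow_sub_ofReal_cpow_le_mul_sub {x y : ℝ} (s : ℂ) (hx : 0 < x) (hxy : x ≤ y)
    (hy : y ≤ 2 * x) :
    ‖(y : ℂ) ^ s - (x : ℂ) ^ s‖ ≤ ‖s‖ * (2 ^ |s.re - 1| * x ^ (s.re - 1)) * (y - x) := by
  have hderiv : ∀ t ∈ Set.Icc x y,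
      HasDerivWithinAt (fun t : ℝ => (t : ℂ) ^ s) (s * (t : ℂ) ^ (s - 1)) (Set.Icc x y) t :=
    fun t ht => (hasDerivAt_ofReal_cpow_const_of_pos (hx.trans_le ht.1) s).hasDerivWithinAt
  have hbound : ∀ t ∈ Set.Ico x y,
      ‖s * (t : ℂ) ^ (s - 1)‖ ≤ ‖s‖ * (2 ^ |s.re - 1| * x ^ (s.re - 1)) := by
    intro t ht
    rw [norm_mul, norm_cpow_eq_rpow_re_of_pos (hx.trans_le ht.1), sub_re, one_re]
    gcongr
    exact rpow_le_two_rpow_abs_mul_rpow _ hx ht.1 (ht.2.le.trans hy)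
  exact norm_image_sub_le_of_norm_deriv_le_segment' hderiv hbound y (Set.right_mem_Icc.mpr hxy)

lemma norm_ofReal_cpow_sub_ofReal_cpow_le {x y : ℝ} (s : ℂ) (hx : 0 < x) (hxy : x ≤ y)
    (hy : y ≤ 2 * x) : ‖(y : ℂ) ^ s - (x : ℂ) ^ s‖ ≤ (2 ^ |s.re| + 1) * x ^ s.re := by
  calc ‖(y : ℂ) ^ s - (x : ℂ) ^ s‖ ≤ ‖(y : ℂ) ^ s‖ + ‖(x : ℂ) ^ s‖ := norm_sub_le _ _
    _ = y ^ s.re + x ^ s.re := by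
        rw [norm_cpow_eq_rpow_re_of_pos (hx.trans_le hxy), norm_cpow_eq_rpow_re_of_pos hx]
    _ ≤ 2 ^ |s.re| * x ^ s.re + x ^ s.re := by
        gcongr; exact rpow_le_two_rpow_abs_mul_rpow _ hx hxy hy
    _ = (2 ^ |s.re| + 1) * x ^ s.re := by ring

lemma min_le_rpow {r β : ℝ} (hr : 0 ≤ r) (hβ0 : 0 ≤ β) (hβ1 : β ≤ 1) : min r 1 ≤ r ^ β := by
  rcases le_total r 1 with hr1 | hr1
  · calc min r 1 ≤ r ^ (1 : ℝ) := by rw [Real.rpow_one]; exact min_le_left r 1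
      _ ≤ r ^ β := Real.rpow_le_rpow_of_exponent_ge' hr hr1 hβ0 hβ1
  · exact (min_le_right r 1).trans (Real.one_le_rpow hr1 hβ0)

lemma two_rpow_le_two_pow {a : ℝ} {n : ℕ} (h : a ≤ n) : (2 : ℝ) ^ a ≤ 2 ^ n := by
  simpa using Real.rpow_le_rpow_of_exponent_le one_le_two h

lemma two_rpow_abs_add_one_le {σ : ℝ} {k : ℕ} (hk : 0 < k) (hσ : |σ| ≤ 3 * k) :
    2 ^ |σ| + 1 ≤ (2 : ℝ) ^ (10 * k) :=
  calc 2 ^ |σ| + 1 ≤ (2 : ℝ) ^ (3 * k) + 2 ^ (3 * k) := by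
        gcongr
        · exact two_rpow_le_two_pow (by push_cast; exact hσ)
        · exact one_le_pow₀ one_le_two
    _ = 2 ^ (3 * k + 1) := by ring
    _ ≤ 2 ^ (10 * k) := pow_le_pow_right₀ one_le_two (by omega)

lemma norm_mul_two_rpow_abs_sub_one_le {σ τ : ℝ} {k : ℕ} (hk : 0 < k) (hσ : |σ| ≤ 3 * k) :
    ‖(σ : ℂ) + τ * I‖ * 2 ^ |σ - 1| ≤ 2 ^ (10 * k) * (|τ| + 1) := by
  have hnorm : ‖(σ : ℂ) + τ * I‖ ≤ 2 ^ (2 * k) * (|τ| + 1) := by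
    have hbernoulli : 1 + 3 * (k : ℝ) ≤ 2 ^ (2 * k) := by
      have := one_add_mul_le_pow (by norm_num : (-2 : ℝ) ≤ 3) k
      rw [pow_mul]; norm_num at this ⊢; linarith
    calc ‖(σ : ℂ) + τ * I‖ ≤ |σ| + |τ| := by
          simpa using norm_add_le (σ : ℂ) (τ * I)
      _ ≤ (1 + 3 * k) * (|τ| + 1) := by nlinarith [abs_nonneg τ]
      _ ≤ 2 ^ (2 * k) * (|τ| + 1) := by gcongr
  have hpow : (2 : ℝ) ^ |σ - 1| ≤ 2 ^ (3 * k + 1) :=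
    two_rpow_le_two_pow (by push_cast; linarith [abs_sub σ 1, abs_one (α := ℝ)])
  calc ‖(σ : ℂ) + τ * I‖ * 2 ^ |σ - 1| ≤ 2 ^ (2 * k) * (|τ| + 1) * 2 ^ (3 * k + 1) := by
        gcongr
    _ = 2 ^ (5 * k + 1) * (|τ| + 1) := by ring
    _ ≤ 2 ^ (10 * k) * (|τ| + 1) := by gcongr; exacts [one_le_two, by omega]

/-- `|(X+H)^{σ+iτ} − X^{σ+iτ}| ≤ 2^{10k}·X^{σ−β}·(|τ|+1)^β·H^β` for `0 < H ≤ X`,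
`|σ| ≤ 3k` and `β ∈ [0,1]`. -/
theorem cpow_difference_bound (k : ℕ) (hk : 0 < k) (H X β σ τ : ℝ)
    (hH : 0 < H) (hHX : H ≤ X) (hσ : |σ| ≤ 3 * (k : ℝ)) (hβ0 : 0 ≤ β) (hβ1 : β ≤ 1) :
    ‖((X + H : ℝ) : ℂ)^((σ : ℂ) + (τ : ℂ) * Complex.I) -
        ((X : ℝ) : ℂ)^((σ : ℂ) + (τ : ℂ) * Complex.I)‖ ≤
      2^(10*k) * X^(σ - β) * (|τ| + 1)^β * H^β := by
  have hX : 0 < X := hH.trans_le hHX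
  have hXH : X ≤ X + H := by linarith
  have hXH2 : X + H ≤ 2 * X := by linarith
  set s : ℂ := σ + τ * I
  have hre : s.re = σ := by simp [s]
  set r := (|τ| + 1) * H / X
  have hsmall : ‖((X + H : ℝ) : ℂ) ^ s - (X : ℂ) ^ s‖ ≤ 2 ^ (10 * k) * X ^ σ * r :=
    calc _ ≤ ‖s‖ * (2 ^ |σ - 1| * X ^ (σ - 1)) * (X + H - X) := by
          simpa only [hre] using norm_ofReal_cpow_sub_ofReal_cpow_le_mul_sub s hX hXH hXH2
      _ = ‖s‖ * 2 ^ |σ - 1| * (X ^ σ * (H / X)) := by rw [Real.rpow_sub_one hX.ne']; ring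
      _ ≤ 2 ^ (10 * k) * (|τ| + 1) * (X ^ σ * (H / X)) :=
          mul_le_mul_of_nonneg_right (norm_mul_two_rpow_abs_sub_one_le hk hσ) (by positivity)
      _ = 2 ^ (10 * k) * X ^ σ * r := by ring
  have hlarge : ‖((X + H : ℝ) : ℂ) ^ s - (X : ℂ) ^ s‖ ≤ 2 ^ (10 * k) * X ^ σ * 1 :=
    calc _ ≤ (2 ^ |σ| + 1) * X ^ σ := by
          simpa only [hre] using norm_ofReal_cpow_sub_ofReal_cpow_le s hX hXH hXH2
      _ ≤ 2 ^ (10 * k) * X ^ σ * 1 := by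
          rw [mul_one]; gcongr; exact two_rpow_abs_add_one_le hk hσ
  calc _ ≤ 2 ^ (10 * k) * X ^ σ * min r 1 := by
        rw [mul_min_of_nonneg _ _ (by positivity)]; exact le_min hsmall hlarge
    _ ≤ 2 ^ (10 * k) * X ^ σ * r ^ β := by gcongr; exact min_le_rpow (by positivity) hβ0 hβ1
    _ = 2 ^ (10 * k) * X ^ (σ - β) * (|τ| + 1) ^ β * H ^ β := by
        rw [Real.div_rpow (by positivity) hX.le, Real.mul_rpow (by positivity) hH.le,
          Real.rpow_sub hX]
        ring
end
end

section
/- Let p be an odd prime with p ∈ S. Then (1 − p^{−1})³·F_p(1, 2k−1) = (1 + 2/p + 3/p^{2k} + (2p+1)/p^{4k})·(1 − 1/p)·(1 − p^{−(6k−2)})^{−1}. -/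
open scoped BigOperators Classical
open Filter Asymptotics

noncomputable section

set_option maxHeartbeats 1000000

/-- The local factor of the leading constant at an odd prime `p ∈ S`:
`(1 − 1/p)³·F_p(1,2k−1) = (1 + 2/p + 3/p^{2k} + (2p+1)/p^{4k})(1 − 1/p)(1 − p^{−(6k−2)})⁻¹`. -/
theorem local_factor_of_mem (k : ℕ) (hk : 0 < k) (S : Finset ℕ) (hS : ∀ p ∈ S, p.Prime)
    (p : ℕ) (hp : p.Prime) (hp2 : p ≠ 2) (hpS : p ∈ S) :
    (1 - (p : ℝ)⁻¹)^3 * FpOne k S p =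
      (1 + 2/(p : ℝ) + 3/(p : ℝ)^(2*k) + (2*(p : ℝ) + 1)/(p : ℝ)^(4*k)) *
        (1 - 1/(p : ℝ)) * (1 - ((p : ℝ)^(6*k-2))⁻¹)⁻¹ := by
  have hp3 : 3 ≤ p := by
    have := hp.two_le; omega
  have hpR : (3:ℝ) ≤ (p:ℝ) := by exact_mod_cast hp3
  have hpR1 : (1:ℝ) < (p:ℝ) := by linarith
  have hq1 : (1:ℝ) < (p:ℝ)^(2*k-1) := one_lt_pow₀ hpR1 (by omega)
  have hq0 : (0:ℝ) < (p:ℝ)^(2*k-1) := lt_trans one_pos hq1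
  have hqne : ((p:ℝ)^(2*k-1)) ≠ 0 := ne_of_gt hq0
  have hpne : (p:ℝ) ≠ 0 := by positivity
  set q : ℝ := (p:ℝ)^(2*k-1) with hqdef
  set t : ℝ := (p:ℝ)⁻¹ with htdef
  set u : ℝ := q⁻¹ with hudef
  have ht0 : 0 < t := by rw [htdef]; positivity
  have ht1 : t < 1 := by rw [htdef]; exact inv_lt_one_of_one_lt₀ hpR1
  have hu0 : 0 < u := by rw [hudef]; positivity
  have hu1 : u < 1 := by rw [hudef]; exact inv_lt_one_of_one_lt₀ hq1
  have htne : (1:ℝ) - t ≠ 0 := by linarith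
  have hune : (1:ℝ) - u ≠ 0 := by linarith
  have htu3 : t * u^3 < 1 := by
    nlinarith [(pow_le_one₀ (le_of_lt hu0) (le_of_lt hu1) : u^3 ≤ 1), ht0, ht1, pow_pos hu0 3]
  have htu30 : 0 < t * u^3 := by positivity
  have htu3ne : (1:ℝ) - t * u^3 ≠ 0 := by linarith
  have huq : u * q = 1 := inv_mul_cancel₀ hqne
  -- value of rstar at p^b
  have hrs : ∀ b : ℕ, rstar k (p^b) = (1 - q^(b+1)) / (1 - q) := by
    intro b
    unfold rstar
    rw [hp.factorization_pow, Finsupp.prod_single_index]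
    · unfold rstarPP
      rw [if_neg (by simp [hp2]), mul_comm (b+1) (2*k-1), pow_mul, ← hqdef]
    · unfold rstarPP
      rw [if_neg (by simp)]
      simp only [zero_add, one_mul]
      rw [← hqdef]
      exact div_self (by linarith)
  -- each term of the inner sum
  have hterm : ∀ b : ℕ, ((p:ℝ)^(b*(2*k-1)))⁻¹ * rstar k (p^b) = (1 - u^(b+1)) / (1-u) := by
    intro b
    have hub : ((p:ℝ)^(b*(2*k-1)))⁻¹ = u^b := by
      rw [hudef, inv_pow, hqdef, ← pow_mul, mul_comm (2*k-1) b]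
    rw [hrs b, hub, ← mul_div_assoc, div_eq_div_iff (by linarith) hune]
    have k1 : u^b * q^b = 1 := by rw [← mul_pow, huq, one_pow]
    linear_combination (1 - q) * k1 + (u^b * q^b - u^b) * huq
  -- closed form of partial sums
  have hG : ∀ n : ℕ, ∑ b ∈ Finset.range n, ((p:ℝ)^(b*(2*k-1)))⁻¹ * rstar k (p^b)
      = ((n:ℝ)*(1-u) - u*(1-u^n)) / (1-u)^2 := by
    intro n
    induction n with
    | zero => simp
    | succ n ih =>
      rw [Finset.sum_range_succ, ih, hterm n]
      push_cast
      field_simp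
      ring
  -- FpOne as a closed form
  have key : FpOne k S p
      = (3/(1-u)) * (t/(1-t)^2) + ((1-2*u)/(1-u)^2) * (1-t)⁻¹
        + (u^2/(1-u)^2) * (1 - t*u^3)⁻¹ := by
    unfold FpOne
    rw [if_pos hpS]
    have hpt : ∀ a : ℕ, ((p:ℝ)^a)⁻¹ *
        ∑ b ∈ Finset.range (3*a+1), ((p:ℝ)^(b*(2*k-1)))⁻¹ * rstar k (p^b)
        = (3/(1-u)) * ((a:ℝ) * t^a) + ((1-2*u)/(1-u)^2) * t^a
          + (u^2/(1-u)^2) * (t*u^3)^a := by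
      intro a
      rw [hG (3*a+1)]
      have hta : ((p:ℝ)^a)⁻¹ = t^a := by rw [htdef, inv_pow]
      rw [hta]
      push_cast
      rw [mul_pow t (u^3) a, ← pow_mul u 3 a]
      have hux : u^(3*a+1) = u * u^(3*a) := by rw [← pow_succ', Nat.add_comm (3*a) 1]
      rw [hux]
      field_simp
      ring
    rw [tsum_congr hpt]
    have htn : ‖t‖ < 1 := by rw [Real.norm_eq_abs, abs_of_pos ht0]; exact ht1
    have s1 : Summable (fun a : ℕ => (a:ℝ) * t^a) := by
      have := summable_pow_mul_geometric_of_norm_lt_one (R := ℝ) 1 htn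
      simpa using this
    have s2 : Summable (fun a : ℕ => t^a) := summable_geometric_of_lt_one (le_of_lt ht0) ht1
    have s3 : Summable (fun a : ℕ => (t*u^3)^a) :=
      summable_geometric_of_lt_one (le_of_lt htu30) htu3
    rw [Summable.tsum_add ((s1.mul_left _).add (s2.mul_left _)) (s3.mul_left _),
      Summable.tsum_add (s1.mul_left _) (s2.mul_left _),
      tsum_mul_left, tsum_mul_left, tsum_mul_left,
      tsum_geometric_of_lt_one (le_of_lt ht0) ht1,
      tsum_geometric_of_lt_one (le_of_lt htu30) htu3,
      tsum_coe_mul_geometric_of_norm_lt_one htn]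
  rw [key]
  -- rewrite the right-hand side powers in terms of q
  have e2k : (p:ℝ)^(2*k) = (p:ℝ) * q := by
    conv_lhs => rw [show 2*k = 1 + (2*k-1) from by omega]
    rw [pow_add, pow_one, ← hqdef]
  have e4k : (p:ℝ)^(4*k) = (p:ℝ)^2 * q^2 := by
    conv_lhs => rw [show 4*k = 2 + (2*k-1)*2 from by omega]
    rw [pow_add, pow_mul, ← hqdef]
  have e6k : (p:ℝ)^(6*k-2) = (p:ℝ) * q^3 := by
    conv_lhs => rw [show 6*k-2 = 1 + (2*k-1)*3 from by omega]
    rw [pow_add, pow_one, pow_mul, ← hqdef]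
  have hpinv : (p:ℝ) = t⁻¹ := by rw [htdef, inv_inv]
  have hqinv : q = u⁻¹ := by rw [hudef, inv_inv]
  have ht0' : t ≠ 0 := ne_of_gt ht0
  have hu0' : u ≠ 0 := ne_of_gt hu0
  rw [e2k, e4k, e6k, hqinv, hpinv]
  have h5 : (1:ℝ) - (t⁻¹ * (u⁻¹)^3)⁻¹ ≠ 0 := by
    rw [mul_inv, inv_inv, ← inv_pow, inv_inv]; exact htu3ne
  field_simp
  ring
end
end
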